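/- Let X have density p on ℝ with T_α(X||Z) < ∞, i.e. ∫ p(x)^α φ(x)^{1-α} dx < ∞ for some α > 1, β = α/(α-1), Z standard normal. Then E e^{tX} · e^{-β t²/2} → 0 as |t| → ∞. -/

import Mathlib

open MeasureTheory Filter

/-- The standard normal density on the real line. -/
noncomputable def stdNormalPDF (x : ℝ) : ℝ :=
  (Real.sqrt (2 * Real.pi))⁻¹ * Real.exp (-x ^ 2 / 2)

/-!
Completing the square gives `e^{tx} e^{-βt²/2} = φ(x)^{-1/β} φ(x - βt)^{1/β}`, so the quantity is
`∫ f(x) g(x - βt) dx` with `f = p φ^{-1/β}` and `g = φ^{1/β}`. The hypothesis says exactly that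
`f ∈ L^α`, and `‖g‖_β = 1`. For conjugate exponents such a correlation vanishes at infinity:
by Hölder, outside a large ball the `L^α` tail of `f` is small, while on the ball the `L^β` mass of
the far translate of `g` is small.
-/

open Metric Set Real
open scoped ENNReal Topology

theorem tendsto_setLIntegral_compl_ball_atTop {E : Type*} [PseudoMetricSpace E]
    [MeasurableSpace E] [OpensMeasurableSpace E] {μ : Measure E} {f : E → ℝ≥0∞}
    (hf : AEMeasurable f μ) (hfin : ∫⁻ x, f x ∂μ ≠ ∞) (c : E) :
    Tendsto (fun r : ℝ => ∫⁻ x in (ball c r)ᶜ, f x ∂μ) atTop (𝓝 0) := by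
  have hlim (x : E) : Tendsto (fun r : ℝ => (ball c r)ᶜ.indicator f x) atTop (𝓝 0) :=
    tendsto_const_nhds.congr' <| (eventually_gt_atTop (dist x c)).mono fun r hr =>
      (indicator_of_notMem (not_not_intro (mem_ball.2 hr)) f).symm
  simpa only [← lintegral_indicator measurableSet_ball.compl, lintegral_zero] using
    tendsto_lintegral_filter_of_dominated_convergence' f
      (.of_forall fun r => hf.indicator measurableSet_ball.compl)
      (.of_forall fun r => .of_forall fun x => indicator_le_self _ _ x) hfin (.of_forall hlim)

section Translate

variable {E : Type*} [NormedAddCommGroup E] [MeasurableSpace E] [BorelSpace E] {μ : Measure E}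
  [μ.IsAddRightInvariant]

theorem setLIntegral_ball_comp_sub (g : E → ℝ≥0∞) (s : E) (R : ℝ) :
    ∫⁻ x in ball 0 R, g (x - s) ∂μ = ∫⁻ x in ball (-s) R, g x ∂μ := by
  rw [← lintegral_indicator measurableSet_ball, ← lintegral_indicator measurableSet_ball,
    ← lintegral_sub_right_eq_self ((ball (-s) R).indicator g) s]
  congr with x
  simp [indicator, dist_eq_norm]

theorem tendsto_setLIntegral_ball_comp_sub_cobounded {g : E → ℝ≥0∞} (hg : AEMeasurable g μ)
    (hfin : ∫⁻ x, g x ∂μ ≠ ∞) (R : ℝ) :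
    Tendsto (fun s => ∫⁻ x in ball 0 R, g (x - s) ∂μ) (Bornology.cobounded E) (𝓝 0) := by
  have htail := (tendsto_setLIntegral_compl_ball_atTop hg hfin 0).comp
    (tendsto_atTop_add_const_right _ (-R) (tendsto_norm_cobounded_atTop (E := E)))
  refine tendsto_of_tendsto_of_tendsto_of_le_of_le tendsto_const_nhds htail (fun _ => zero_le)
    fun s => ?_
  rw [setLIntegral_ball_comp_sub]
  refine lintegral_mono_set fun y hy => ?_
  simp only [mem_compl_iff, mem_ball, dist_zero_right, not_lt]
  rw [mem_ball, dist_eq_norm, sub_neg_eq_add] at hy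
  have := norm_sub_le (y + s) y
  rw [add_sub_cancel_left] at this
  linarith

theorem lintegral_mul_comp_sub_le {p q : ℝ} (hpq : p.HolderConjugate q) {f g : E → ℝ≥0∞}
    (hf : AEMeasurable f μ) (hg : Measurable g) (s : E) (R : ℝ) :
    ∫⁻ x, f x * g (x - s) ∂μ ≤
      (∫⁻ x, f x ^ p ∂μ) ^ (1 / p) * (∫⁻ x in ball 0 R, g (x - s) ^ q ∂μ) ^ (1 / q) +
        (∫⁻ x in (ball 0 R)ᶜ, f x ^ p ∂μ) ^ (1 / p) * (∫⁻ x, g x ^ q ∂μ) ^ (1 / q) := by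
  have hgs : Measurable fun x => g (x - s) := hg.comp (measurable_sub_const s)
  rw [← lintegral_add_compl _ measurableSet_ball]
  gcongr
  · refine (ENNReal.lintegral_mul_le_Lp_mul_Lq _ hpq hf.restrict hgs.aemeasurable).trans ?_
    exact mul_le_mul_left
      (ENNReal.rpow_le_rpow (setLIntegral_le_lintegral _ _) hpq.one_div_nonneg) _
  · refine (ENNReal.lintegral_mul_le_Lp_mul_Lq _ hpq hf.restrict hgs.aemeasurable).trans ?_
    refine mul_le_mul_right (ENNReal.rpow_le_rpow ?_ hpq.symm.one_div_nonneg) _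
    exact (setLIntegral_le_lintegral _ _).trans_eq
      (lintegral_sub_right_eq_self (fun x => g x ^ q) s)

theorem tendsto_lintegral_mul_comp_sub_cobounded {p q : ℝ} (hpq : p.HolderConjugate q)
    {f g : E → ℝ≥0∞} (hf : AEMeasurable f μ) (hg : Measurable g)
    (hfp : ∫⁻ x, f x ^ p ∂μ ≠ ∞) (hgq : ∫⁻ x, g x ^ q ∂μ ≠ ∞) :
    Tendsto (fun s => ∫⁻ x, f x * g (x - s) ∂μ) (Bornology.cobounded E) (𝓝 0) := by
  have hp := hpq.one_div_pos
  have hq := hpq.symm.one_div_pos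
  have htail : Tendsto (fun R : ℝ =>
      (∫⁻ x in (ball 0 R)ᶜ, f x ^ p ∂μ) ^ (1 / p) * (∫⁻ x, g x ^ q ∂μ) ^ (1 / q))
      atTop (𝓝 0) := by
    have := ENNReal.Tendsto.mul_const
      ((tendsto_setLIntegral_compl_ball_atTop (hf.pow_const p) hfp 0).ennrpow_const (1 / p))
      (Or.inr (ENNReal.rpow_ne_top_of_nonneg hq.le hgq))
    rwa [ENNReal.zero_rpow_of_pos hp, zero_mul] at this
  have hlocal (R : ℝ) : Tendsto (fun s =>
      (∫⁻ x, f x ^ p ∂μ) ^ (1 / p) * (∫⁻ x in ball 0 R, g (x - s) ^ q ∂μ) ^ (1 / q))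
      (Bornology.cobounded E) (𝓝 0) := by
    have := ENNReal.Tendsto.const_mul
      ((tendsto_setLIntegral_ball_comp_sub_cobounded (hg.pow_const q).aemeasurable hgq
        R).ennrpow_const (1 / q))
      (Or.inr (ENNReal.rpow_ne_top_of_nonneg hp.le hfp))
    rwa [ENNReal.zero_rpow_of_pos hq, mul_zero] at this
  rw [ENNReal.tendsto_nhds_zero]
  intro ε hε
  obtain ⟨R, hR⟩ := (htail.eventually_lt_const (ENNReal.half_pos hε.ne')).exists
  filter_upwards [(hlocal R).eventually_lt_const (ENNReal.half_pos hε.ne')] with s hs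
  calc ∫⁻ x, f x * g (x - s) ∂μ ≤ ε / 2 + ε / 2 :=
        (lintegral_mul_comp_sub_le hpq hf hg s R).trans (add_le_add hs.le hR.le)
    _ = ε := ENNReal.add_halves ε

end Translate

theorem stdNormalPDF_pos (x : ℝ) : 0 < stdNormalPDF x := by
  unfold stdNormalPDF; positivity

theorem measurable_stdNormalPDF : Measurable stdNormalPDF := by
  unfold stdNormalPDF; fun_prop

theorem lintegral_stdNormalPDF : ∫⁻ x, ENNReal.ofReal (stdNormalPDF x) = 1 := by
  have h : stdNormalPDF = ProbabilityTheory.gaussianPDFReal 0 1 := by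
    ext x; simp [stdNormalPDF, ProbabilityTheory.gaussianPDFReal]
  rw [h]
  exact ProbabilityTheory.lintegral_gaussianPDFReal_eq_one 0 one_ne_zero

theorem stdNormalPDF_sub_div (a x : ℝ) :
    stdNormalPDF (x - a) / stdNormalPDF x = exp (a * x - a ^ 2 / 2) := by
  rw [div_eq_iff (stdNormalPDF_pos x).ne', stdNormalPDF, stdNormalPDF, mul_left_comm, ← exp_add]
  ring_nf

theorem exp_mul_mul_exp_eq_stdNormalPDF_rpow {β : ℝ} (hβ : β ≠ 0) (t x : ℝ) :
    exp (t * x) * exp (-β * t ^ 2 / 2) =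
      stdNormalPDF x ^ (-β⁻¹) * stdNormalPDF (x - β * t) ^ β⁻¹ := by
  have hφ := stdNormalPDF_pos x
  rw [rpow_neg hφ.le, ← inv_rpow hφ.le, ← mul_rpow (inv_nonneg.2 hφ.le) (stdNormalPDF_pos _).le,
    inv_mul_eq_div, stdNormalPDF_sub_div, ← exp_mul, ← exp_add]
  congr 1
  field_simp
  ring

theorem ofReal_mul_stdNormalPDF_rpow_rpow {α β : ℝ} (hαβ : α.HolderConjugate β) {y : ℝ}
    (hy : 0 ≤ y) (x : ℝ) :
    ENNReal.ofReal (y * stdNormalPDF x ^ (-β⁻¹)) ^ α =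
      ENNReal.ofReal (y ^ α / stdNormalPDF x ^ (α - 1)) := by
  have hφ := stdNormalPDF_pos x
  rw [ENNReal.ofReal_rpow_of_nonneg (by positivity) hαβ.nonneg, mul_rpow hy (by positivity),
    ← rpow_mul hφ.le, div_eq_mul_inv, ← rpow_neg hφ.le, neg_mul, inv_mul_eq_div,
    hαβ.div_conj_eq_sub_one]

theorem ofReal_stdNormalPDF_rpow_inv_rpow {β : ℝ} (hβ : 0 < β) (x : ℝ) :
    ENNReal.ofReal (stdNormalPDF x ^ β⁻¹) ^ β = ENNReal.ofReal (stdNormalPDF x) := by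
  have hφ := stdNormalPDF_pos x
  rw [ENNReal.ofReal_rpow_of_nonneg (by positivity) hβ.le, ← rpow_mul hφ.le,
    inv_mul_cancel₀ hβ.ne', rpow_one]

theorem integral_exp_mul_mul_exp_eq_toReal_lintegral {β : ℝ} (hβ : β ≠ 0) {p : ℝ → ℝ}
    (hpm : Measurable p) (hp : ∀ x, 0 ≤ p x) (t : ℝ) :
    (∫ x, exp (t * x) * p x) * exp (-β * t ^ 2 / 2) =
      (∫⁻ x, ENNReal.ofReal (p x * stdNormalPDF x ^ (-β⁻¹)) *
        ENNReal.ofReal (stdNormalPDF (x - β * t) ^ β⁻¹)).toReal := by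
  rw [← integral_mul_const, integral_eq_lintegral_of_nonneg_ae
      (.of_forall fun x => mul_nonneg (mul_nonneg (exp_pos _).le (hp x)) (exp_pos _).le)
      (by fun_prop)]
  congr 1
  refine lintegral_congr fun x => ?_
  have hφ := stdNormalPDF_pos x
  rw [← ENNReal.ofReal_mul (mul_nonneg (hp x) (by positivity)), mul_assoc (p x),
    ← exp_mul_mul_exp_eq_stdNormalPDF_rpow hβ]
  ring_nf

theorem mgf_subgaussian_decay_general (α β : ℝ) (hα : 1 < α) (hβ : β = α / (α - 1))
    (p : ℝ → ℝ) (hpm : Measurable p) (hp : ∀ x, 0 ≤ p x)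
    (hfin : Integrable (fun x => p x ^ α / stdNormalPDF x ^ (α - 1))) :
    Tendsto (fun t : ℝ => (∫ x, Real.exp (t * x) * p x) * Real.exp (-β * t ^ 2 / 2))
      (cocompact ℝ) (nhds 0) := by
  have hαβ : α.HolderConjugate β := (holderConjugate_iff_eq_conjExponent hα).2 hβ
  have hβ0 : β ≠ 0 := hαβ.symm.ne_zero
  have hf : ∫⁻ x, ENNReal.ofReal (p x * stdNormalPDF x ^ (-β⁻¹)) ^ α ≠ ∞ := by
    simpa only [ofReal_mul_stdNormalPDF_rpow_rpow hαβ (hp _)] using hfin.lintegral_lt_top.ne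
  have hg : ∫⁻ x, ENNReal.ofReal (stdNormalPDF x ^ β⁻¹) ^ β ≠ ∞ := by
    simp [ofReal_stdNormalPDF_rpow_inv_rpow hαβ.symm.pos, lintegral_stdNormalPDF]
  have hlim := (tendsto_lintegral_mul_comp_sub_cobounded hαβ
    (f := fun x => ENNReal.ofReal (p x * stdNormalPDF x ^ (-β⁻¹)))
    (hpm.mul (measurable_stdNormalPDF.pow_const _)).ennreal_ofReal.aemeasurable
    (measurable_stdNormalPDF.pow_const _).ennreal_ofReal hf hg).comp
    (tendsto_mul_left_cobounded hβ0)
  rw [← Metric.cobounded_eq_cocompact]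
  simpa only [integral_exp_mul_mul_exp_eq_toReal_lintegral hβ0 hpm hp, Function.comp_def,
    ENNReal.toReal_zero] using
    (ENNReal.tendsto_toReal ENNReal.zero_ne_top).comp hlim

/-- If `X` has density `p` with `∫ p^α / φ^{α-1} < ∞` (`α > 1`, `β = α/(α-1)`),
then `E e^{tX} e^{-β t²/2} → 0` as `|t| → ∞`. -/
theorem mgf_subgaussian_decay (α β : ℝ) (hα : 1 < α) (hβ : β = α / (α - 1))
    (p : ℝ → ℝ) (hpm : Measurable p) (hp : ∀ x, 0 ≤ p x) (hdens : (∫ x, p x) = 1)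
    (hfin : Integrable (fun x => p x ^ α / stdNormalPDF x ^ (α - 1))) :
    Tendsto (fun t : ℝ => (∫ x, Real.exp (t * x) * p x) * Real.exp (-β * t ^ 2 / 2))
      (cocompact ℝ) (nhds 0) :=
  mgf_subgaussian_decay_general α β hα hβ p hpm hp hfin
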